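/- Let P^* : B → C be a functor left adjoint to P_* : C → B, with unit η : Id_B → P_* P^*, and let T = T(P^*,P_*) be the induced comonad on C. If B is idempotent complete and η admits a left inverse natural transformation (i.e. there is a natural transformation λ : P_* P^* → Id_B with λ ∘ η = id), then the comparison functor Φ : B → C_T is an equivalence of categories. -/

import Mathlib

/-!
Since `λ ∘ η = 𝟙`, every component of the unit is split mono, which makes the comparison functor
`Φ` fully faithful. For a comodule `(A, a)`, the map `a : A ⟶ P^* P_* A` is a comodule morphism
into `Φ (P_* A)`, and the transpose of the endomorphism `P_* a ≫ λ` of `P_* A` is a comodule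
retraction of it. So `(A, a)` is a retract of an object in the essential image of `Φ`, and the
essential image of a fully faithful functor out of an idempotent complete category is closed
under retracts: split the preimage of the idempotent.
-/

open CategoryTheory

universe v₁ v₂ u₁ u₂

namespace CategoryTheory

theorem Functor.essImage_of_retract {B : Type u₁} {D : Type u₂} [Category.{v₁} B]
    [Category.{v₂} D] [IsIdempotentComplete B] (F : B ⥤ D) [F.Full] [F.Faithful]
    {X : D} {Y : B} (h : Retract X (F.obj Y)) : F.essImage X := by
  let p : Y ⟶ Y := F.preimage (h.r ≫ h.i)
  have hp : p ≫ p = p := F.map_injective <| by simp [p, h.retract_assoc]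
  obtain ⟨Z, i, e, hie, hei⟩ := IsIdempotentComplete.idempotents_split Y p hp
  have hFei : F.map e ≫ F.map i = h.r ≫ h.i := by rw [← F.map_comp, hei, F.map_preimage]
  refine ⟨Z, ⟨⟨F.map i ≫ h.r, h.i ≫ F.map e, ?_, ?_⟩⟩⟩
  · calc (F.map i ≫ h.r) ≫ h.i ≫ F.map e
        = F.map ((i ≫ e) ≫ i ≫ e) := by rw [Category.assoc, ← reassoc_of% hFei]; simp
      _ = 𝟙 _ := by rw [hie, Category.id_comp, F.map_id]
  · calc (h.i ≫ F.map e) ≫ F.map i ≫ h.r = h.i ≫ (h.r ≫ h.i) ≫ h.r := by simp [← hFei]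
      _ = 𝟙 X := by simp

variable {B : Type u₁} {C : Type u₂} [Category.{v₁} B] [Category.{v₂} C]
  {L : B ⥤ C} {R : C ⥤ B} (adj : L ⊣ R)

namespace Adjunction

theorem comparison_full_of_isSplitMono_unit [∀ X, IsSplitMono (adj.unit.app X)] :
    (Comonad.comparison adj).Full where
  map_surjective {X Y} g := by
    obtain ⟨r, hr⟩ : ∃ r, adj.unit.app Y ≫ r = 𝟙 Y := ⟨retraction _, IsSplitMono.id _⟩
    have map_preimage (f : L.obj X ⟶ L.obj Y)
        (hf : L.map (adj.unit.app X) ≫ L.map (R.map f) = f ≫ L.map (adj.unit.app Y)) :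
        L.map (adj.unit.app X ≫ R.map f ≫ r) = f := by
      rw [L.map_comp, L.map_comp, reassoc_of% hf, ← L.map_comp, hr, L.map_id, Category.comp_id]
    exact ⟨_, Comonad.Coalgebra.Hom.ext (map_preimage g.f g.h)⟩

variable {adj}

-- The transpose `L.map k ≫ ε` of such a `k` is a comodule morphism `Φ (R A) ⟶ (A, a)`.
theorem map_unit_app_comp_map_map_transpose {A : C} {a : A ⟶ L.obj (R.obj A)}
    {k : R.obj A ⟶ R.obj A} (hk : k ≫ R.map a = k ≫ adj.unit.app (R.obj A)) :
    L.map (adj.unit.app (R.obj A)) ≫ L.map (R.map (L.map k ≫ adj.counit.app A)) =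
      (L.map k ≫ adj.counit.app A) ≫ a := by
  have lhs : L.map (adj.unit.app (R.obj A)) ≫ L.map (R.map (L.map k ≫ adj.counit.app A)) =
      L.map k := by
    rw [← L.map_comp, R.map_comp, adj.unit_naturality_assoc (f := k),
      adj.right_triangle_components, Category.comp_id]
  have rhs : (L.map k ≫ adj.counit.app A) ≫ a = L.map k := by
    rw [Category.assoc, ← adj.counit_naturality (f := a), ← L.map_comp_assoc, hk, L.map_comp,
      Category.assoc, adj.left_triangle_components, Category.comp_id]
  rw [lhs, rhs]

variable (lam : L ⋙ R ⟶ 𝟭 B)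

-- Naturality of `λ` turns coassociativity of `a` into this identity.
theorem comp_map_eq_comp_unit_app {A : C} {a : A ⟶ L.obj (R.obj A)}
    (ha : a ≫ L.map (adj.unit.app (R.obj A)) = a ≫ L.map (R.map a)) :
    (R.map a ≫ lam.app _) ≫ R.map a = (R.map a ≫ lam.app _) ≫ adj.unit.app (R.obj A) := by
  have lam_naturality {X Y : B} (f : X ⟶ Y) : R.map (L.map f) ≫ lam.app Y = lam.app X ≫ f :=
    lam.naturality f
  calc (R.map a ≫ lam.app _) ≫ R.map a
      = R.map (a ≫ L.map (R.map a)) ≫ lam.app (R.obj (L.obj (R.obj A))) := by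
        simp [lam_naturality]
    _ = R.map (a ≫ L.map (adj.unit.app (R.obj A))) ≫ lam.app (R.obj (L.obj (R.obj A))) := by
        rw [ha]
    _ = (R.map a ≫ lam.app _) ≫ adj.unit.app (R.obj A) := by simp [lam_naturality]

variable {lam} (hlam : adj.unit ≫ lam = 𝟙 _)
include hlam

theorem unit_app_comp_app (X : B) : adj.unit.app X ≫ lam.app X = 𝟙 X := by
  simpa using NatTrans.congr_app hlam X

theorem isSplitMono_unit_app (X : B) : IsSplitMono (adj.unit.app X) :=
  .mk' ⟨lam.app X, unit_app_comp_app hlam X⟩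

theorem comp_map_comp_counit_app_eq_id {A : C} {a : A ⟶ L.obj (R.obj A)}
    (ha : a ≫ L.map (adj.unit.app (R.obj A)) = a ≫ L.map (R.map a))
    (ha' : a ≫ adj.counit.app A = 𝟙 A) :
    a ≫ L.map (R.map a ≫ lam.app _) ≫ adj.counit.app A = 𝟙 A := by
  rw [L.map_comp_assoc, ← reassoc_of% ha, ← L.map_comp_assoc,
    unit_app_comp_app hlam, L.map_id, Category.id_comp, ha']

def comparisonRetract (A : adj.toComonad.Coalgebra) :
    Retract A ((Comonad.comparison adj).obj (R.obj A.A)) where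
  i := ⟨A.a, A.coassoc.symm⟩
  r := ⟨L.map (R.map A.a ≫ lam.app _) ≫ adj.counit.app A.A,
    map_unit_app_comp_map_map_transpose (comp_map_eq_comp_unit_app lam A.coassoc)⟩
  retract := Comonad.Coalgebra.Hom.ext (comp_map_comp_counit_app_eq_id hlam A.coassoc A.counit)

theorem comparison_essSurj [IsIdempotentComplete B] [(Comonad.comparison adj).Full]
    [(Comonad.comparison adj).Faithful] : (Comonad.comparison adj).EssSurj :=
  ⟨fun A ↦ (Comonad.comparison adj).essImage_of_retract (comparisonRetract hlam A)⟩

end Adjunction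

end CategoryTheory

/-- **Statement 8.** If `P^* ⊣ P_*`, `B` is idempotent complete and the unit
`η : 𝟭 B ⟶ P^* ⋙ P_*` admits a left inverse natural transformation, then the comparison
functor `B ⥤ C_{T(P^*, P_*)}` to the Eilenberg–Moore category of comodules over the induced
comonad is an equivalence. -/
theorem comonadComparison_isEquivalence_of_split_unit
    {B : Type u₁} {C : Type u₂} [Category.{v₁} B] [Category.{v₂} C]
    (Pstar : B ⥤ C) (Psub : C ⥤ B) (adj : Pstar ⊣ Psub)
    [IsIdempotentComplete B]
    (lam : Pstar ⋙ Psub ⟶ 𝟭 B) (hlam : adj.unit ≫ lam = 𝟙 (𝟭 B)) :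
    (Comonad.comparison adj).IsEquivalence := by
  have := Adjunction.isSplitMono_unit_app hlam
  have := adj.faithful_L_of_mono_unit_app
  have := adj.comparison_full_of_isSplitMono_unit
  have := Adjunction.comparison_essSurj hlam
  exact { }
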